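/- The set Φ of entangled states/effects of oblate stabilizer theory is invariant under exchange of the two subsystems: letting S be the swap operator on ℂ² ⊗ ℂ² (determined by S(x ⊗ y) = y ⊗ x), one has {S Q S : Q ∈ Φ} = Φ. -/
import Mathlib


open Matrix Kronecker Complex

noncomputable section

/-- The Pauli matrices indexed by ℤ₄. -/
def pauli : ZMod 4 → Matrix (Fin 2) (Fin 2) ℂ := fun μ =>
  if μ = 0 then 1
  else if μ = 1 then !![0, 1; 1, 0]
  else if μ = 2 then !![0, -Complex.I; Complex.I, 0]
  else !![1, 0; 0, -1]

/-- The rotation R = diag(e^{-iπ/8}, e^{iπ/8}). -/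
def R : Matrix (Fin 2) (Fin 2) ℂ :=
  !![Complex.exp (-(Real.pi / 8 : ℝ) * Complex.I), 0;
     0, Complex.exp ((Real.pi / 8 : ℝ) * Complex.I)]

/-- The Bell vector |Φ⁺⟩ = (|00⟩+|11⟩)/√2. -/
def bell : Fin 2 × Fin 2 → ℂ := fun p =>
  if p.1 = p.2 then ((Real.sqrt 2 : ℝ) : ℂ)⁻¹ else 0

/-- The Bell projector P_Φ = |Φ⁺⟩⟨Φ⁺|. -/
def PΦ : Matrix (Fin 2 × Fin 2) (Fin 2 × Fin 2) ℂ :=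
  Matrix.of fun p q => bell p * (starRingEnd ℂ) (bell q)

/-- Φ⁺_{μ,m} = ((σ_μ R^m)† ⊗ I) P_Φ ((σ_μ R^m) ⊗ I). -/
def PhiProj (μ : ZMod 4) (m : ZMod 8) : Matrix (Fin 2 × Fin 2) (Fin 2 × Fin 2) ℂ :=
  ((pauli μ * R ^ m.val)ᴴ ⊗ₖ (1 : Matrix (Fin 2) (Fin 2) ℂ)) * PΦ *
    ((pauli μ * R ^ m.val) ⊗ₖ (1 : Matrix (Fin 2) (Fin 2) ℂ))

/-- r = 2^{1/4}. -/
def r : ℝ := (2 : ℝ) ^ ((1 : ℝ) / 4)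

/-- The stretched stabilizer states Ω. -/
def Ω : Set (Matrix (Fin 2) (Fin 2) ℂ) :=
  { (1 / 2 : ℂ) • (1 + (r : ℂ) • pauli 1),
    (1 / 2 : ℂ) • (1 - (r : ℂ) • pauli 1),
    (1 / 2 : ℂ) • (1 + (r : ℂ) • pauli 2),
    (1 / 2 : ℂ) • (1 - (r : ℂ) • pauli 2),
    (1 / 2 : ℂ) • (1 + pauli 3),
    (1 / 2 : ℂ) • (1 - pauli 3) }

/-- The set Φ of entangled states/effects. -/
def PhiSet : Set (Matrix (Fin 2 × Fin 2) (Fin 2 × Fin 2) ℂ) :=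
  { Q | ∃ μ : ZMod 4, ∃ m : ZMod 8, m ∈ ({1, 3, 5, 7} : Set (ZMod 8)) ∧ Q = PhiProj μ m }

/-- Place a 4×4 matrix `Q` on tensor factors (2,3) of (ℂ²)⊗⁴ (identity on factors 1 and 4). -/
def mid (Q : Matrix (Fin 2 × Fin 2) (Fin 2 × Fin 2) ℂ) :
    Matrix ((Fin 2 × Fin 2) × (Fin 2 × Fin 2)) ((Fin 2 × Fin 2) × (Fin 2 × Fin 2)) ℂ :=
  Matrix.of fun p q =>
    (1 : Matrix (Fin 2) (Fin 2) ℂ) p.1.1 q.1.1 *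
      Q (p.1.2, p.2.1) (q.1.2, q.2.1) *
      (1 : Matrix (Fin 2) (Fin 2) ℂ) p.2.2 q.2.2

/-- Partial trace over the first tensor factor of ℂ² ⊗ ℂ². -/
def ptr1 (M : Matrix (Fin 2 × Fin 2) (Fin 2 × Fin 2) ℂ) : Matrix (Fin 2) (Fin 2) ℂ :=
  Matrix.of fun i j => ∑ a : Fin 2, M (a, i) (a, j)

/-- Partial trace over the second tensor factor of ℂ² ⊗ ℂ². -/
def ptr2 (M : Matrix (Fin 2 × Fin 2) (Fin 2 × Fin 2) ℂ) : Matrix (Fin 2) (Fin 2) ℂ :=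
  Matrix.of fun i j => ∑ a : Fin 2, M (i, a) (j, a)

/-- Partial trace over the second and third tensor factors of (ℂ²)⊗⁴. -/
def ptr23
    (M : Matrix ((Fin 2 × Fin 2) × (Fin 2 × Fin 2)) ((Fin 2 × Fin 2) × (Fin 2 × Fin 2)) ℂ) :
    Matrix (Fin 2 × Fin 2) (Fin 2 × Fin 2) ℂ :=
  Matrix.of fun p q => ∑ b : Fin 2, ∑ c : Fin 2, M ((p.1, b), (c, p.2)) ((q.1, b), (c, q.2))

end

/-- The swap operator on ℂ² ⊗ ℂ², S(x ⊗ y) = y ⊗ x. -/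
def swapOp : Matrix (Fin 2 × Fin 2) (Fin 2 × Fin 2) ℂ :=
  Matrix.of fun p q => if p.1 = q.2 ∧ p.2 = q.1 then 1 else 0


noncomputable section

lemma pauli0 : pauli 0 = 1 := rfl
lemma pauli1 : pauli 1 = !![0, 1; 1, 0] := rfl
lemma pauli2 : pauli 2 = !![0, -Complex.I; Complex.I, 0] := rfl
lemma pauli3 : pauli 3 = !![1, 0; 0, -1] := rfl

lemma sandwich (A : Matrix (Fin 2) (Fin 2) ℂ) :
    (Aᴴ ⊗ₖ (1 : Matrix (Fin 2) (Fin 2) ℂ)) * PΦ * (A ⊗ₖ 1) =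
      Matrix.of fun p q => (starRingEnd ℂ) (A p.2 p.1) * A q.2 q.1 / 2 := by
  ext ⟨p1, p2⟩ ⟨q1, q2⟩
  simp [Matrix.mul_apply, Fintype.sum_prod_type, Fin.sum_univ_two, PΦ, bell,
    Matrix.one_apply, conjTranspose_apply]
  fin_cases p1 <;> fin_cases p2 <;> fin_cases q1 <;> fin_cases q2 <;>
    simp <;> ring_nf <;>
    simp [Complex.ext_iff, ← Complex.ofReal_pow, Real.sq_sqrt] <;>
    constructor <;> ring

lemma swap_conj (M : Matrix (Fin 2 × Fin 2) (Fin 2 × Fin 2) ℂ) :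
    swapOp * M * swapOp = Matrix.of fun p q => M (p.2, p.1) (q.2, q.1) := by
  ext ⟨p1, p2⟩ ⟨q1, q2⟩
  simp [Matrix.mul_apply, Fintype.sum_prod_type, Fin.sum_univ_two, swapOp,
    Prod.ext_iff]
  fin_cases p1 <;> fin_cases p2 <;> fin_cases q1 <;> fin_cases q2 <;> simp

lemma Rpow (k : ℕ) : R ^ k =
    !![Complex.exp (-(k * (Real.pi : ℂ) / 8) * Complex.I), 0;
       0, Complex.exp ((k * (Real.pi : ℂ) / 8) * Complex.I)] := by
  induction k with
  | zero =>
    norm_num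
    ext i j
    fin_cases i <;> fin_cases j <;> simp [Matrix.one_apply]
  | succ n ih =>
    rw [pow_succ, ih, R]
    ext i j
    fin_cases i <;> fin_cases j <;>
      simp [Matrix.mul_apply, Fin.sum_univ_two, ← Complex.exp_add] <;>
      congr 1 <;> push_cast <;> ring

lemma p0t (k : ℕ) : (pauli 0 * R ^ k)ᵀ = pauli 0 * R ^ k := by
  rw [Rpow]
  ext i j
  fin_cases i <;> fin_cases j <;>
    simp [pauli0, pauli1, pauli2, pauli3, Matrix.mul_apply, Fin.sum_univ_two]

lemma p3t (k : ℕ) : (pauli 3 * R ^ k)ᵀ = pauli 3 * R ^ k := by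
  rw [Rpow]
  ext i j
  fin_cases i <;> fin_cases j <;>
    simp [pauli0, pauli1, pauli2, pauli3, Matrix.mul_apply, Fin.sum_univ_two]

lemma exp_flipA (k : ℕ) (hk : k ≤ 8) :
    Complex.exp ((((8 - k : ℕ) : ℂ) * (Real.pi : ℂ) / 8) * Complex.I) =
      -Complex.exp (-(((k : ℕ) : ℂ) * (Real.pi : ℂ) / 8 * Complex.I)) := by
  have h8 : ((8 - k : ℕ) : ℂ) = 8 - (k : ℂ) := by push_cast [hk]; ring
  rw [h8, show ((8 : ℂ) - k) * (Real.pi : ℂ) / 8 * Complex.I =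
      (Real.pi : ℂ) * Complex.I + -((k : ℂ) * (Real.pi : ℂ) / 8 * Complex.I) by ring,
    Complex.exp_add, Complex.exp_pi_mul_I]
  ring

lemma exp_flipB (k : ℕ) (hk : k ≤ 8) :
    Complex.exp (-(((8 - k : ℕ) : ℂ) * (Real.pi : ℂ) / 8 * Complex.I)) =
      -Complex.exp ((((k : ℕ) : ℂ) * (Real.pi : ℂ) / 8) * Complex.I) := by
  have h8 : ((8 - k : ℕ) : ℂ) = 8 - (k : ℂ) := by push_cast [hk]; ring
  rw [h8, show -(((8 : ℂ) - k) * (Real.pi : ℂ) / 8 * Complex.I) =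
      -((Real.pi : ℂ) * Complex.I) + ((k : ℂ) * (Real.pi : ℂ) / 8) * Complex.I by ring,
    Complex.exp_add, Complex.exp_neg, Complex.exp_pi_mul_I]
  field_simp

lemma p1t (k : ℕ) (hk : k ≤ 8) : pauli 1 * R ^ (8 - k) = -(pauli 1 * R ^ k)ᵀ := by
  rw [Rpow, Rpow]
  ext i j
  fin_cases i <;> fin_cases j <;>
    simp [pauli0, pauli1, pauli2, pauli3, Matrix.mul_apply, Fin.sum_univ_two,
      exp_flipA k hk, exp_flipB k hk, Matrix.transpose_apply, Matrix.vecHead, Matrix.vecTail]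

lemma p2t (k : ℕ) (hk : k ≤ 8) : pauli 2 * R ^ (8 - k) = (pauli 2 * R ^ k)ᵀ := by
  rw [Rpow, Rpow]
  ext i j
  fin_cases i <;> fin_cases j <;>
    simp [pauli0, pauli1, pauli2, pauli3, Matrix.mul_apply, Fin.sum_univ_two,
      exp_flipA k hk, exp_flipB k hk, Matrix.transpose_apply, Matrix.vecHead, Matrix.vecTail]

lemma p1t' (k k' : ℕ) (h : 8 - k = k') (hk : k ≤ 8) :
    pauli 1 * R ^ k' = -(pauli 1 * R ^ k)ᵀ := h ▸ p1t k hk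

lemma p2t' (k k' : ℕ) (h : 8 - k = k') (hk : k ≤ 8) :
    pauli 2 * R ^ k' = (pauli 2 * R ^ k)ᵀ := h ▸ p2t k hk

lemma entry_eq (U U' : Matrix (Fin 2) (Fin 2) ℂ) (h : U' = Uᵀ ∨ U' = -Uᵀ) :
    swapOp * ((Uᴴ ⊗ₖ (1 : Matrix (Fin 2) (Fin 2) ℂ)) * PΦ * (U ⊗ₖ 1)) * swapOp =
      (U'ᴴ ⊗ₖ (1 : Matrix (Fin 2) (Fin 2) ℂ)) * PΦ * (U' ⊗ₖ 1) := by
  rw [sandwich, sandwich, swap_conj]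
  rcases h with rfl | rfl <;> ext ⟨p1, p2⟩ ⟨q1, q2⟩ <;>
    simp [Matrix.transpose_apply, Matrix.neg_apply, map_neg] <;> ring

lemma swap_PhiProj (μ : ZMod 4) (m m' : ZMod 8)
    (h : pauli μ * R ^ m'.val = (pauli μ * R ^ m.val)ᵀ ∨
         pauli μ * R ^ m'.val = -(pauli μ * R ^ m.val)ᵀ) :
    swapOp * PhiProj μ m * swapOp = PhiProj μ m' := by
  unfold PhiProj
  exact entry_eq _ _ h

lemma fwd {Q : Matrix (Fin 2 × Fin 2) (Fin 2 × Fin 2) ℂ} (h : Q ∈ PhiSet) :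
    swapOp * Q * swapOp ∈ PhiSet := by
  obtain ⟨μ, m, hm, rfl⟩ := h
  have hμ : μ = 0 ∨ μ = 1 ∨ μ = 2 ∨ μ = 3 := by
    have : ∀ x : ZMod 4, x = 0 ∨ x = 1 ∨ x = 2 ∨ x = 3 := by decide
    exact this μ
  simp only [Set.mem_insert_iff, Set.mem_singleton_iff] at hm
  rcases hμ with rfl | rfl | rfl | rfl
  · exact ⟨0, m, by simpa using hm, (swap_PhiProj 0 m m (Or.inl (p0t m.val).symm))⟩
  · rcases hm with rfl | rfl | rfl | rfl
    · exact ⟨1, 7, by simp, (swap_PhiProj 1 1 7 (Or.inr (p1t' 1 7 rfl (by norm_num))))⟩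
    · exact ⟨1, 5, by simp, (swap_PhiProj 1 3 5 (Or.inr (p1t' 3 5 rfl (by norm_num))))⟩
    · exact ⟨1, 3, by simp, (swap_PhiProj 1 5 3 (Or.inr (p1t' 5 3 rfl (by norm_num))))⟩
    · exact ⟨1, 1, by simp, (swap_PhiProj 1 7 1 (Or.inr (p1t' 7 1 rfl (by norm_num))))⟩
  · rcases hm with rfl | rfl | rfl | rfl
    · exact ⟨2, 7, by simp, (swap_PhiProj 2 1 7 (Or.inl (p2t' 1 7 rfl (by norm_num))))⟩
    · exact ⟨2, 5, by simp, (swap_PhiProj 2 3 5 (Or.inl (p2t' 3 5 rfl (by norm_num))))⟩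
    · exact ⟨2, 3, by simp, (swap_PhiProj 2 5 3 (Or.inl (p2t' 5 3 rfl (by norm_num))))⟩
    · exact ⟨2, 1, by simp, (swap_PhiProj 2 7 1 (Or.inl (p2t' 7 1 rfl (by norm_num))))⟩
  · exact ⟨3, m, by simpa using hm, (swap_PhiProj 3 m m (Or.inl (p3t m.val).symm))⟩

end

/-- The set Φ is invariant under exchange of the two subsystems:
{S Q S : Q ∈ Φ} = Φ. -/
theorem stmt_18 : (fun Q => swapOp * Q * swapOp) '' PhiSet = PhiSet := by
  apply Set.Subset.antisymm
  · rintro _ ⟨Q, hQ, rfl⟩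
    exact fwd hQ
  · intro Q hQ
    refine ⟨swapOp * Q * swapOp, fwd hQ, ?_⟩
    show swapOp * (swapOp * Q * swapOp) * swapOp = Q
    rw [swap_conj Q, swap_conj]
    ext ⟨a, b⟩ ⟨c, d⟩
    simp
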